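/- arXiv:math/0511072 — 3 statements merged into one kernel-verified Lean document; each statement's English description precedes it below -/
import Mathlib

section
/- For ω a primitive n-th root of unity and 0 ≤ j < n, the 4×4 matrix Ř with Ř e₁⊗e₁ = ω^j e₁⊗e₁, Ř e₂⊗e₂ = ω^j e₂⊗e₂, Ř e₁⊗e₂ = ω^{-j} e₂⊗e₁, Ř e₂⊗e₁ = ω^{-j} e₁⊗e₂ satisfies the braid relation (Ř⊗I)(I⊗Ř)(Ř⊗I) = (I⊗Ř)(Ř⊗I)(I⊗Ř) on ℂ²⊗ℂ²⊗ℂ². -/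
/-- Embedding of a matrix on `ℂ²⊗ℂ²` into the first two factors of `ℂ²⊗ℂ²⊗ℂ²`. -/
def emb12 (R : Matrix (Fin 2 × Fin 2) (Fin 2 × Fin 2) ℂ) :
    Matrix (Fin 2 × Fin 2 × Fin 2) (Fin 2 × Fin 2 × Fin 2) ℂ :=
  fun p q => R (p.1, p.2.1) (q.1, q.2.1) * (if p.2.2 = q.2.2 then 1 else 0)

/-- Embedding of a matrix on `ℂ²⊗ℂ²` into the last two factors of `ℂ²⊗ℂ²⊗ℂ²`. -/
def emb23 (R : Matrix (Fin 2 × Fin 2) (Fin 2 × Fin 2) ℂ) :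
    Matrix (Fin 2 × Fin 2 × Fin 2) (Fin 2 × Fin 2 × Fin 2) ℂ :=
  fun p q => (if p.1 = q.1 then 1 else 0) * R (p.2.1, p.2.2) (q.2.1, q.2.2)

/-- The constant braiding matrix from the two-dimensional irreps of `D(D_n)`:
`Ř e₁⊗e₁ = ω^j e₁⊗e₁`, `Ř e₂⊗e₂ = ω^j e₂⊗e₂`, `Ř e₁⊗e₂ = ω^{-j} e₂⊗e₁`,
`Ř e₂⊗e₁ = ω^{-j} e₁⊗e₂`. -/
noncomputable def Rcheck (ω : ℂ) (j : ℕ) : Matrix (Fin 2 × Fin 2) (Fin 2 × Fin 2) ℂ :=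
  fun p q =>
    if p = (0, 0) ∧ q = (0, 0) then ω ^ j
    else if p = (1, 1) ∧ q = (1, 1) then ω ^ j
    else if p = (1, 0) ∧ q = (0, 1) then ω ^ (-(j : ℤ))
    else if p = (0, 1) ∧ q = (1, 0) then ω ^ (-(j : ℤ))
    else 0

noncomputable def gfun (ω : ℂ) (j : ℕ) (a b : Fin 2) : ℂ :=
  if a = b then ω ^ j else ω ^ (-(j : ℤ))

lemma Rcheck_eq (ω : ℂ) (j : ℕ) (p q : Fin 2 × Fin 2) :
    Rcheck ω j p q = if p.1 = q.2 ∧ p.2 = q.1 then gfun ω j p.1 p.2 else 0 := by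
  obtain ⟨a, b⟩ := p; obtain ⟨c, d⟩ := q
  fin_cases a <;> fin_cases b <;> fin_cases c <;> fin_cases d <;>
    simp [Rcheck, gfun, Prod.ext_iff]

set_option maxHeartbeats 2000000 in
theorem constant_braid_relation (n : ℕ) (hn : 1 ≤ n) (ω : ℂ)
    (hω : IsPrimitiveRoot ω n) (j : ℕ) (hj : j < n) :
    emb12 (Rcheck ω j) * emb23 (Rcheck ω j) * emb12 (Rcheck ω j) =
      emb23 (Rcheck ω j) * emb12 (Rcheck ω j) * emb23 (Rcheck ω j) := by
  ext ⟨a, b, c⟩ ⟨d, e, f⟩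
  fin_cases a <;> fin_cases b <;> fin_cases c <;> fin_cases d <;> fin_cases e <;> fin_cases f <;>
    simp [Matrix.mul_apply, Fintype.sum_prod_type, Fin.sum_univ_two, emb12, emb23, Rcheck_eq,
      gfun, mul_comm] <;> ring
end

section
/- The matrix Ř(x) = [[ω^{2j}x^{-1} - ω^{-2j}x, 0, 0, 0], [0, ω^{2j} - ω^{-2j}, x^{-1}-x, 0], [0, x^{-1}-x, ω^{2j} - ω^{-2j}, 0], [0, 0, 0, ω^{2j}x^{-1} - ω^{-2j}x]] satisfies the unitarity condition Ř(x)Ř(x^{-1}) = (ω^{4j} + ω^{-4j} - x² - x^{-2}) · I₄ for all nonzero complex x. -/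
/-- The six-vertex `Ř(x)` in the symmetric gauge. -/
noncomputable def Rsym (ω : ℂ) (j : ℤ) (x : ℂ) : Matrix (Fin 4) (Fin 4) ℂ :=
  !![ω ^ (2 * j) * x⁻¹ - ω ^ (-2 * j) * x, 0, 0, 0;
     0, ω ^ (2 * j) - ω ^ (-2 * j), x⁻¹ - x, 0;
     0, x⁻¹ - x, ω ^ (2 * j) - ω ^ (-2 * j), 0;
     0, 0, 0, ω ^ (2 * j) * x⁻¹ - ω ^ (-2 * j) * x]

set_option maxHeartbeats 1000000 in
theorem six_vertex_unitarity (n : ℕ) (hn : 1 ≤ n) (ω : ℂ)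
    (hω : IsPrimitiveRoot ω n) (j : ℤ) (x : ℂ) (hx : x ≠ 0) :
    Rsym ω j x * Rsym ω j x⁻¹ =
      (ω ^ (4 * j) + ω ^ (-4 * j) - x ^ 2 - x⁻¹ ^ 2) • (1 : Matrix (Fin 4) (Fin 4) ℂ) := by
  have hω0 : ω ≠ 0 := hω.ne_zero (by omega)
  have ha : ω ^ (2 * j) ≠ 0 := zpow_ne_zero _ hω0
  have h4 : ω ^ (4 * j) = ω ^ (2 * j) * ω ^ (2 * j) := by
    rw [← zpow_add₀ hω0]; ring_nf
  unfold Rsym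
  rw [inv_inv]
  ext i k
  fin_cases i <;> fin_cases k <;>
    simp [Matrix.mul_apply, Fin.sum_univ_succ, Matrix.one_apply] <;>
    (try rw [h4]) <;>
    field_simp <;> ring
end

section
/- The 21-vertex matrix Ř(x) (defined as in the previous context) satisfies the unitarity condition Ř(x)Ř(x^{-1}) = (x - 1 + x^{-1})² · I₉ for all nonzero complex x, and the regularity condition Ř(1) = I₉. -/
set_option maxHeartbeats 1000000


/-- The 21-vertex `Ř(x)`, in the lexicographic basis `e_i ⊗ e_j` of `ℂ³⊗ℂ³`. -/
def R21 (x : ℂ) : Matrix (Fin 3 × Fin 3) (Fin 3 × Fin 3) ℂ :=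
  fun p q =>
    if p = q then (if p.1 = p.2 then x ^ 2 - x + 1 else x)
    else if (p = (0, 1) ∧ q = (1, 2)) ∨ (p = (0, 2) ∧ q = (2, 1)) ∨
            (p = (1, 0) ∧ q = (0, 2)) ∨ (p = (1, 2) ∧ q = (2, 0)) ∨
            (p = (2, 0) ∧ q = (0, 1)) ∨ (p = (2, 1) ∧ q = (1, 0)) then 1 - x
    else if (p = (0, 1) ∧ q = (2, 0)) ∨ (p = (0, 2) ∧ q = (1, 0)) ∨
            (p = (1, 0) ∧ q = (2, 1)) ∨ (p = (1, 2) ∧ q = (0, 1)) ∨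
            (p = (2, 0) ∧ q = (1, 2)) ∨ (p = (2, 1) ∧ q = (0, 2)) then x * (x - 1)
    else 0

theorem twentyone_vertex_unitarity_regularity (x : ℂ) (hx : x ≠ 0) :
    R21 x * R21 x⁻¹ =
      ((x - 1 + x⁻¹) ^ 2) • (1 : Matrix (Fin 3 × Fin 3) (Fin 3 × Fin 3) ℂ) ∧
      R21 1 = 1 := by
  constructor
  · ext ⟨a, b⟩ ⟨c, d⟩
    rw [Matrix.mul_apply]
    rw [Fintype.sum_prod_type]
    fin_cases a <;> fin_cases b <;> fin_cases c <;> fin_cases d <;>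
      simp (config := { decide := true }) [R21, Fin.sum_univ_three, Matrix.one_apply] <;>
      field_simp <;> ring
  · ext ⟨a, b⟩ ⟨c, d⟩
    fin_cases a <;> fin_cases b <;> fin_cases c <;> fin_cases d <;>
      simp [R21, Matrix.one_apply, Prod.ext_iff, Fin.ext_iff]
end
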